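/- Optimality of water-filling with respect to submajorization: let (X, μ) be a probability space, f ∈ L∞(X,μ)⁺, w ≥ ∫_X f dμ, and let c ≥ essinf f be the unique level such that ∫_X max{f, c} dμ = w. Then for every h ∈ L∞(X,μ)⁺ with f ≤ h a.e. and ∫_X h dμ ≥ w, the function f_c = max{f, c} is submajorized by h, i.e. ∫_0^s (f_c)*(t) dt ≤ ∫_0^s h*(t) dt for all s ∈ [0,1]. -/

import Mathlib

open MeasureTheory Set

/-- The decreasing rearrangement `f*(s) = sup { t ≥ 0 : μ{x : f x > t} > s }`. -/
noncomputable def decRearr {X : Type*} [MeasurableSpace X] (μ : Measure X)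
    (f : X → ℝ) (s : ℝ) : ℝ :=
  sSup {t : ℝ | 0 ≤ t ∧ ENNReal.ofReal s < μ {x | t < f x}}

/-- `g ≺_w f` : `f` submajorizes `g`. -/
def Submajorizes {X : Type*} [MeasurableSpace X] (μ : Measure X)
    (f g : X → ℝ) : Prop :=
  ∀ s ∈ Icc (0:ℝ) 1, ∫ t in (0:ℝ)..s, decRearr μ g t ≤ ∫ t in (0:ℝ)..s, decRearr μ f t

/-! The functional `s ↦ ∫₀ˢ g*` has the variational description
`∫₀ˢ g* = min_{r ≥ 0} (r s + ∫ (g - r)⁺ dμ)`, with the minimum attained at `r = g*(s)`: this follows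
from the layer-cake formula, since `g*` on `(0, 1]` and `g` on `X` have the same distribution above
every level `a ≥ 0`. Put `r = h*(s)`. If `c ≤ r`, then `(max f c - r)⁺ ≤ (h - r)⁺` pointwise and the
bound at level `r` compares the two sides directly. If `r < c`, the bound at level `c` gives
`∫₀ˢ (f_c)* ≤ c s + (w - c) ≤ r s + (w - r) ≤ r s + ∫ (h - r)⁺ dμ`, using `∫ h ≥ w`. -/

lemma lt_max_sub_zero_iff {a r t : ℝ} (ht : 0 < t) : t < max (a - r) 0 ↔ r + t < a := by
  rw [lt_max_iff, or_iff_left ht.not_gt, lt_sub_iff_add_lt']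

lemma integrable_max_sub_zero {α : Type*} [MeasurableSpace α] {ν : Measure α} [IsFiniteMeasure ν]
    {φ : α → ℝ} {C : ℝ} (hm : AEMeasurable φ ν) (hb : ∀ᵐ x ∂ν, φ x ≤ C) (r : ℝ) :
    Integrable (fun x => max (φ x - r) 0) ν := by
  refine .of_bound ((hm.sub_const r).max aemeasurable_const).aestronglyMeasurable (max (C - r) 0) ?_
  filter_upwards [hb] with x hx
  rw [Real.norm_of_nonneg (le_max_right _ _)]
  exact max_le_max (by linarith) le_rfl

lemma integrable_of_nonneg_of_le {α : Type*} [MeasurableSpace α] {ν : Measure α}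
    [IsFiniteMeasure ν] {φ : α → ℝ} {C : ℝ} (hm : AEStronglyMeasurable φ ν)
    (h0 : ∀ᵐ x ∂ν, 0 ≤ φ x) (hb : ∀ᵐ x ∂ν, φ x ≤ C) : Integrable φ ν :=
  .of_bound hm C (by filter_upwards [h0, hb] with x hx0 hxC; rwa [Real.norm_of_nonneg hx0])

section Probability

variable {α : Type*} [MeasurableSpace α] {ν : Measure α} [IsProbabilityMeasure ν] {φ : α → ℝ}

lemma integral_sub_const (hφ : Integrable φ ν) (a : ℝ) :
    ∫ x, (φ x - a) ∂ν = ∫ x, φ x ∂ν - a := by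
  rw [integral_sub hφ (integrable_const a), integral_const, probReal_univ, one_smul]

lemma integral_sub_le_integral_max_sub_zero (hφ : Integrable φ ν) (a : ℝ) :
    ∫ x, φ x ∂ν - a ≤ ∫ x, max (φ x - a) 0 ∂ν := by
  rw [← integral_sub_const hφ]
  exact integral_mono (hφ.sub (integrable_const a)) (hφ.sub (integrable_const a)).pos_part
    fun x => le_max_left _ _

lemma integral_max_sub_zero_of_le (hφ : Integrable φ ν) {a : ℝ} (ha : ∀ᵐ x ∂ν, a ≤ φ x) :
    ∫ x, max (φ x - a) 0 ∂ν = ∫ x, φ x ∂ν - a := by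
  rw [← integral_sub_const hφ]
  exact integral_congr_ae (ha.mono fun x hx => max_eq_left (sub_nonneg.2 hx))

end Probability

section Antitone

variable {φ : ℝ → ℝ} {s : ℝ}

lemma Antitone.intervalIntegral_le_mul_add (hφ : Antitone φ) (hs : s ∈ Icc (0 : ℝ) 1) (r : ℝ) :
    ∫ t in (0 : ℝ)..s, φ t ≤ r * s + ∫ t in Ioc (0 : ℝ) 1, max (φ t - r) 0 := by
  have hψ : Antitone fun t => max (φ t - r) 0 :=
    fun a b hab => max_le_max (sub_le_sub_right (hφ hab) r) le_rfl
  have htail : 0 ≤ ∫ t in s..1, max (φ t - r) 0 :=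
    intervalIntegral.integral_nonneg hs.2 fun t _ => le_max_right _ _
  calc ∫ t in (0 : ℝ)..s, φ t ≤ ∫ t in (0 : ℝ)..s, (r + max (φ t - r) 0) :=
        intervalIntegral.integral_mono_on hs.1 hφ.intervalIntegrable
          (intervalIntegrable_const.add hψ.intervalIntegrable)
          fun t _ => by linarith [le_max_left (φ t - r) 0]
    _ = r * s + ∫ t in (0 : ℝ)..s, max (φ t - r) 0 := by
        rw [intervalIntegral.integral_add intervalIntegrable_const hψ.intervalIntegrable,
          intervalIntegral.integral_const, smul_eq_mul, sub_zero, mul_comm]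
    _ ≤ r * s + ∫ t in Ioc (0 : ℝ) 1, max (φ t - r) 0 := by
        rw [← intervalIntegral.integral_of_le zero_le_one,
          ← intervalIntegral.integral_add_adjacent_intervals (b := s) (c := 1) hψ.intervalIntegrable
            hψ.intervalIntegrable]
        linarith

lemma Antitone.intervalIntegral_eq_mul_add (hφ : Antitone φ) (hs : s ∈ Icc (0 : ℝ) 1) :
    ∫ t in (0 : ℝ)..s, φ t = φ s * s + ∫ t in Ioc (0 : ℝ) 1, max (φ t - φ s) 0 := by
  have hψ : Antitone fun t => max (φ t - φ s) 0 :=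
    fun a b hab => max_le_max (sub_le_sub_right (hφ hab) _) le_rfl
  have hhead : ∫ t in (0 : ℝ)..s, max (φ t - φ s) 0 = ∫ t in (0 : ℝ)..s, (φ t - φ s) :=
    intervalIntegral.integral_congr fun t ht => by
      rw [uIcc_of_le hs.1] at ht
      exact max_eq_left (sub_nonneg.2 (hφ ht.2))
  have htail : ∫ t in s..1, max (φ t - φ s) 0 = 0 := by
    rw [intervalIntegral.integral_congr (g := fun _ => (0 : ℝ)), intervalIntegral.integral_zero]
    intro t ht
    rw [uIcc_of_le hs.2] at ht
    exact max_eq_right (sub_nonpos.2 (hφ ht.1))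
  rw [← intervalIntegral.integral_of_le zero_le_one,
    ← intervalIntegral.integral_add_adjacent_intervals (b := s) (c := 1) hψ.intervalIntegrable
      hψ.intervalIntegrable, htail, add_zero, hhead, intervalIntegral.integral_sub hφ.intervalIntegrable
      intervalIntegrable_const, intervalIntegral.integral_const, smul_eq_mul, sub_zero]
  ring

end Antitone

section Rearrangement

variable {X : Type*} [MeasurableSpace X] {μ : Measure X} {g : X → ℝ} {C : ℝ}

lemma decRearr_nonneg (s : ℝ) : 0 ≤ decRearr μ g s :=
  Real.sSup_nonneg fun _ ht => ht.1

lemma le_of_lt_measure_setOf_lt (hb : ∀ᵐ x ∂μ, g x ≤ C) {s t : ℝ}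
    (ht : ENNReal.ofReal s < μ {x | t < g x}) : t ≤ C := by
  by_contra! hCt
  have hnull : μ {x | t < g x} = 0 :=
    measure_mono_null (fun x hx => not_le.2 (hCt.trans hx)) (ae_iff.1 hb)
  simp [hnull] at ht

lemma bddAbove_decRearr (hb : ∀ᵐ x ∂μ, g x ≤ C) (s : ℝ) :
    BddAbove {t : ℝ | 0 ≤ t ∧ ENNReal.ofReal s < μ {x | t < g x}} :=
  ⟨C, fun _ ht => le_of_lt_measure_setOf_lt hb ht.2⟩

lemma decRearr_le (hb : ∀ᵐ x ∂μ, g x ≤ C) (s : ℝ) : decRearr μ g s ≤ max C 0 :=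
  Real.sSup_le (fun _ ht => (le_of_lt_measure_setOf_lt hb ht.2).trans (le_max_left _ _))
    (le_max_right _ _)

lemma decRearr_antitone (hb : ∀ᵐ x ∂μ, g x ≤ C) : Antitone (decRearr μ g) := fun s _ hss' =>
  Real.sSup_le (fun _ ht => le_csSup (bddAbove_decRearr hb s)
    ⟨ht.1, (ENNReal.ofReal_le_ofReal hss').trans_lt ht.2⟩) (decRearr_nonneg s)

/-- The right-continuity of `a ↦ μ {a < g}` is what makes this an equivalence. -/
lemma lt_decRearr_iff (hb : ∀ᵐ x ∂μ, g x ≤ C) {a : ℝ} (ha : 0 ≤ a) (s : ℝ) :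
    a < decRearr μ g s ↔ ENNReal.ofReal s < μ {x | a < g x} := by
  constructor
  · intro hlt
    by_contra! hle
    refine hlt.not_ge (Real.sSup_le (fun t ht => ?_) ha)
    by_contra! hat
    exact (ht.2.trans_le ((measure_mono fun x hx => hat.trans hx).trans hle)).false
  · intro hμ
    obtain ⟨u, hu_anti, hau, hu_lim⟩ := exists_seq_strictAnti_tendsto a
    have hunion : {x | a < g x} = ⋃ n, {x | u n < g x} := by
      ext x
      simp only [mem_iUnion]
      exact ⟨fun hx => ((hu_lim.eventually (gt_mem_nhds hx)).exists),
        fun ⟨n, hn⟩ => (hau n).trans hn⟩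
    have hmono : Monotone fun n => {x | u n < g x} :=
      fun m n hmn x hx => (hu_anti.antitone hmn).trans_lt hx
    rw [hunion, hmono.measure_iUnion, lt_iSup_iff] at hμ
    obtain ⟨n, hn⟩ := hμ
    exact (hau n).trans_le (le_csSup (bddAbove_decRearr hb s) ⟨ha.trans (hau n).le, hn⟩)

variable [IsProbabilityMeasure μ]

lemma restrict_Ioc_setOf_lt_decRearr (hb : ∀ᵐ x ∂μ, g x ≤ C) {a : ℝ} (ha : 0 ≤ a) :
    volume.restrict (Ioc (0 : ℝ) 1) {s | a < decRearr μ g s} = μ {x | a < g x} := by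
  set M := μ {x | a < g x}
  have hMtop : M ≠ ⊤ := measure_ne_top μ _
  have hM1 : M.toReal ≤ 1 := ENNReal.toReal_le_of_le_ofReal zero_le_one (by simpa using prob_le_one)
  have hset : {s | a < decRearr μ g s} ∩ Ioc 0 1 = Ioo 0 M.toReal := by
    ext s
    simp only [mem_inter_iff, mem_Ioc, mem_Ioo]
    constructor
    · rintro ⟨hlt, hs0, -⟩
      exact ⟨hs0, (ENNReal.ofReal_lt_iff_lt_toReal hs0.le hMtop).1
        ((lt_decRearr_iff hb ha s).1 hlt)⟩
    · rintro ⟨hs0, hsM⟩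
      exact ⟨(lt_decRearr_iff hb ha s).2 ((ENNReal.ofReal_lt_iff_lt_toReal hs0.le hMtop).2 hsM),
        hs0, hsM.le.trans hM1⟩
  rw [Measure.restrict_apply' measurableSet_Ioc, hset, Real.volume_Ioo, sub_zero,
    ENNReal.ofReal_toReal hMtop]

lemma integral_Ioc_max_decRearr_sub (hm : Measurable g) (hb : ∀ᵐ x ∂μ, g x ≤ C) {r : ℝ}
    (hr : 0 ≤ r) :
    ∫ t in Ioc (0 : ℝ) 1, max (decRearr μ g t - r) 0 = ∫ x, max (g x - r) 0 ∂μ := by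
  have hanti := decRearr_antitone (μ := μ) hb
  have hint_star : Integrable (fun t => max (decRearr μ g t - r) 0) (volume.restrict (Ioc 0 1)) :=
    integrable_max_sub_zero hanti.measurable.aemeasurable
      (.of_forall (decRearr_le hb)) r
  rw [hint_star.integral_eq_integral_meas_lt (.of_forall fun _ => le_max_right _ _),
    (integrable_max_sub_zero hm.aemeasurable hb r).integral_eq_integral_meas_lt
      (.of_forall fun _ => le_max_right _ _)]
  refine setIntegral_congr_fun measurableSet_Ioi fun t (ht : 0 < t) => ?_
  simp only [Measure.real, lt_max_sub_zero_iff ht]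
  rw [restrict_Ioc_setOf_lt_decRearr hb (by linarith)]

lemma intervalIntegral_decRearr_le (hm : Measurable g) (hb : ∀ᵐ x ∂μ, g x ≤ C) {s : ℝ}
    (hs : s ∈ Icc (0 : ℝ) 1) {r : ℝ} (hr : 0 ≤ r) :
    ∫ t in (0 : ℝ)..s, decRearr μ g t ≤ r * s + ∫ x, max (g x - r) 0 ∂μ := by
  rw [← integral_Ioc_max_decRearr_sub hm hb hr]
  exact (decRearr_antitone hb).intervalIntegral_le_mul_add hs r

lemma intervalIntegral_decRearr_eq (hm : Measurable g) (hb : ∀ᵐ x ∂μ, g x ≤ C) {s : ℝ}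
    (hs : s ∈ Icc (0 : ℝ) 1) :
    ∫ t in (0 : ℝ)..s, decRearr μ g t
      = decRearr μ g s * s + ∫ x, max (g x - decRearr μ g s) 0 ∂μ := by
  rw [← integral_Ioc_max_decRearr_sub hm hb (decRearr_nonneg s)]
  exact (decRearr_antitone hb).intervalIntegral_eq_mul_add hs

end Rearrangement

theorem waterFilling_submajorized_general {X : Type*} [MeasurableSpace X]
    (μ : Measure X) [IsProbabilityMeasure μ] (f : X → ℝ) (hfm : Measurable f)
    (hfb : ∃ C, ∀ᵐ x ∂μ, f x ≤ C)
    (w : ℝ)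
    (c : ℝ) (hcw : (∫ x, max (f x) c ∂μ) = w)
    (h : X → ℝ) (hhm : Measurable h) (hh0 : ∀ᵐ x ∂μ, 0 ≤ h x)
    (hhb : ∃ C, ∀ᵐ x ∂μ, h x ≤ C)
    (hfh : ∀ᵐ x ∂μ, f x ≤ h x) (hhw : w ≤ ∫ x, h x ∂μ) :
    Submajorizes μ h (fun x => max (f x) c) := by
  intro s hs
  obtain ⟨Cf, hCf⟩ := hfb
  obtain ⟨Ch, hCh⟩ := hhb
  have hfcm : Measurable fun x => max (f x) c := hfm.max measurable_const
  have hfcb : ∀ᵐ x ∂μ, max (f x) c ≤ max Cf c := hCf.mono fun x hx => max_le_max hx le_rfl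
  set r := decRearr μ h s
  have hr : 0 ≤ r := decRearr_nonneg s
  rw [intervalIntegral_decRearr_eq hhm hCh hs]
  rcases le_or_gt c r with hcr | hrc
  · refine (intervalIntegral_decRearr_le hfcm hfcb hs hr).trans (add_le_add_right ?_ _)
    refine integral_mono_of_nonneg (.of_forall fun _ => le_max_right _ _)
      (integrable_max_sub_zero hhm.aemeasurable hCh r) ?_
    filter_upwards [hfh] with x hx
    grind
  · have hc : 0 ≤ c := hr.trans hrc.le
    have hfc_int : Integrable (fun x => max (f x) c) μ := integrable_of_nonneg_of_le
      hfcm.aestronglyMeasurable (.of_forall fun _ => hc.trans (le_max_right _ _)) hfcb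
    have hh_int : Integrable h μ := integrable_of_nonneg_of_le hhm.aestronglyMeasurable hh0 hCh
    calc ∫ t in (0 : ℝ)..s, decRearr μ (fun x => max (f x) c) t
        ≤ c * s + ∫ x, max (max (f x) c - c) 0 ∂μ := intervalIntegral_decRearr_le hfcm hfcb hs hc
      _ = c * s + (w - c) := by
        rw [integral_max_sub_zero_of_le hfc_int (.of_forall fun _ => le_max_right _ _), hcw]
      _ ≤ r * s + (∫ x, h x ∂μ - r) := by nlinarith [hs.2]
      _ ≤ r * s + ∫ x, max (h x - r) 0 ∂μ :=
        add_le_add_right (integral_sub_le_integral_max_sub_zero hh_int r) _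

/-- Optimality of the water-filling `f_c = max{f,c}` with respect to submajorization. -/
theorem waterFilling_submajorized {X : Type*} [MeasurableSpace X]
    (μ : Measure X) [IsProbabilityMeasure μ] (f : X → ℝ) (hfm : Measurable f)
    (hf0 : ∀ᵐ x ∂μ, 0 ≤ f x) (hfb : ∃ C, ∀ᵐ x ∂μ, f x ≤ C)
    (w : ℝ) (hw : (∫ x, f x ∂μ) ≤ w)
    (c : ℝ) (hc : essInf f μ ≤ c) (hcw : (∫ x, max (f x) c ∂μ) = w)
    (h : X → ℝ) (hhm : Measurable h) (hh0 : ∀ᵐ x ∂μ, 0 ≤ h x)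
    (hhb : ∃ C, ∀ᵐ x ∂μ, h x ≤ C)
    (hfh : ∀ᵐ x ∂μ, f x ≤ h x) (hhw : w ≤ ∫ x, h x ∂μ) :
    Submajorizes μ h (fun x => max (f x) c) :=
  waterFilling_submajorized_general μ f hfm hfb w c hcw h hhm hh0 hhb hfh hhw
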